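/- arXiv:2004.10866 — 2 statements merged into one kernel-verified Lean document; each statement's English description precedes it below -/
import Mathlib

section
/- The function u₊(x) = ψ₀(1 + 2sinh²α/(1 + cosh α·cosh(Ax))) satisfies the ordinary differential equation −u'' + u − 2u³ = h on ℝ, where h = √2·cosh²α/(1+2cosh²α)^{3/2}. -/
/-! With `k = 2 sinh² α`, `c = cosh α` and `v = 1 + c cosh (A x)` we have
`u₊ = ψ₀ (1 + k / v)`, whose first two derivatives are explicit rational expressions in
`cosh (A x)` and `sinh (A x)`. After eliminating `sinh² (A x)`, `sinh² α` and
`A² = 4 sinh² α ψ₀²` and clearing the denominator `v³`, the left-hand side of the equation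
minus `h = 4 cosh² α ψ₀³` is `ψ₀ (v + k) v²` times `1 - 2 (1 + 2 cosh² α) ψ₀²`, which
vanishes by the choice of `ψ₀`. -/

open Real

noncomputable def solitonProfile (ψ k c A x : ℝ) : ℝ := ψ * (1 + k / (1 + c * cosh (A * x)))

lemma one_add_mul_cosh_pos {c : ℝ} (hc : 0 ≤ c) (t : ℝ) : 0 < 1 + c * cosh t := by
  have := one_le_cosh t
  positivity

lemma hasDerivAt_one_add_mul_cosh (c A x : ℝ) :
    HasDerivAt (fun y => 1 + c * cosh (A * y)) (c * A * sinh (A * x)) x :=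
  (((hasDerivAt_id' x).const_mul A).cosh.const_mul c).const_add 1 |>.congr_deriv (by ring)

section
variable {ψ k c A : ℝ}

lemma hasDerivAt_solitonProfile (hc : 0 ≤ c) (x : ℝ) :
    HasDerivAt (solitonProfile ψ k c A)
      (-(ψ * k * c * A) * sinh (A * x) / (1 + c * cosh (A * x)) ^ 2) x :=
  ((hasDerivAt_const x k).fun_div (hasDerivAt_one_add_mul_cosh c A x)
    (one_add_mul_cosh_pos hc _).ne' |>.const_add 1).const_mul ψ |>.congr_deriv (by ring)

lemma deriv_solitonProfile (hc : 0 ≤ c) :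
    deriv (solitonProfile ψ k c A) =
      fun x => -(ψ * k * c * A) * sinh (A * x) / (1 + c * cosh (A * x)) ^ 2 :=
  funext fun x => (hasDerivAt_solitonProfile hc x).deriv

lemma hasDerivAt_deriv_solitonProfile (hc : 0 ≤ c) (x : ℝ) :
    HasDerivAt (deriv (solitonProfile ψ k c A))
      (-(ψ * k * c * A ^ 2) * (cosh (A * x) * (1 + c * cosh (A * x)) - 2 * c * sinh (A * x) ^ 2)
        / (1 + c * cosh (A * x)) ^ 3) x := by
  have hv := (one_add_mul_cosh_pos hc (A * x)).ne'
  rw [deriv_solitonProfile hc]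
  refine (((hasDerivAt_id' x).const_mul A).sinh.const_mul (-(ψ * k * c * A))).fun_div
    ((hasDerivAt_one_add_mul_cosh c A x).fun_pow 2) (pow_ne_zero 2 hv) |>.congr_deriv ?_
  field_simp
  ring

lemma contDiff_solitonProfile (hc : 0 ≤ c) {n : WithTop ℕ∞} :
    ContDiff ℝ n (solitonProfile ψ k c A) :=
  contDiff_const.mul <| contDiff_const.add <| contDiff_const.div
    (contDiff_const.add <| contDiff_const.mul <| contDiff_cosh.comp <|
      contDiff_const.mul contDiff_id)
    fun _ => (one_add_mul_cosh_pos hc _).ne'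

theorem solitonProfile_ode {s : ℝ} (hc : 0 ≤ c) (hs : s ^ 2 = c ^ 2 - 1)
    (hA : A ^ 2 = 4 * s ^ 2 * ψ ^ 2) (hψ : 2 * (1 + 2 * c ^ 2) * ψ ^ 2 = 1) (x : ℝ) :
    -deriv (deriv (solitonProfile ψ (2 * s ^ 2) c A)) x + solitonProfile ψ (2 * s ^ 2) c A x
      - 2 * solitonProfile ψ (2 * s ^ 2) c A x ^ 3 = 4 * c ^ 2 * ψ ^ 3 := by
  have hv := (one_add_mul_cosh_pos hc (A * x)).ne'
  rw [(hasDerivAt_deriv_solitonProfile hc x).deriv, sinh_sq, hA, hs]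
  simp only [solitonProfile]
  field_simp
  linear_combination
    (-ψ * (1 + c * cosh (A * x) + 2 * (c ^ 2 - 1)) * (1 + c * cosh (A * x)) ^ 2) * hψ
end

section
variable {t : ℝ}

lemma mul_one_div_sqrt_sq (ht : 0 < t) : t * (1 / √t) ^ 2 = 1 := by
  rw [div_pow, sq_sqrt ht.le]
  field_simp

lemma sqrt_two_mul_div_sqrt_sq (s : ℝ) (ht : 0 ≤ t) :
    (√2 * s / √t) ^ 2 = 4 * s ^ 2 * (1 / √(2 * t)) ^ 2 := by
  rw [div_pow, div_pow, mul_pow, sq_sqrt ht, sq_sqrt zero_le_two, sq_sqrt (by positivity)]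
  ring

lemma sqrt_two_mul_div_rpow_three_halves (m : ℝ) (ht : 0 < t) :
    √2 * m / t ^ ((3 : ℝ) / 2) = 4 * m * (1 / √(2 * t)) ^ 3 := by
  rw [rpow_div_two_eq_sqrt _ ht.le, rpow_ofNat, sqrt_mul zero_le_two]
  have h2 : √2 ^ 2 = 2 := sq_sqrt zero_le_two
  have : 0 < √t := sqrt_pos.2 ht
  field_simp
  linear_combination m * (√2 ^ 2 + 2) * h2
end

theorem stmt7_general (α : ℝ) :
    let ψ₀ : ℝ := 1 / Real.sqrt (2 * (1 + 2 * Real.cosh α ^ 2))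
    let A : ℝ := Real.sqrt 2 * Real.sinh α / Real.sqrt (1 + 2 * Real.cosh α ^ 2)
    let h : ℝ := Real.sqrt 2 * Real.cosh α ^ 2 / (1 + 2 * Real.cosh α ^ 2) ^ ((3 : ℝ) / 2)
    let u : ℝ → ℝ := fun x =>
      ψ₀ * (1 + 2 * Real.sinh α ^ 2 / (1 + Real.cosh α * Real.cosh (A * x)))
    ContDiff ℝ 2 u ∧ ∀ x : ℝ, -(deriv (deriv u)) x + u x - 2 * u x ^ 3 = h := by
  intro ψ₀ A h u
  have ht : 0 < 1 + 2 * cosh α ^ 2 := by positivity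
  have hc : 0 ≤ cosh α := (cosh_pos α).le
  have hψ : 2 * (1 + 2 * cosh α ^ 2) * ψ₀ ^ 2 = 1 := mul_one_div_sqrt_sq (by positivity)
  have hA : A ^ 2 = 4 * sinh α ^ 2 * ψ₀ ^ 2 := sqrt_two_mul_div_sqrt_sq _ ht.le
  have hh : h = 4 * cosh α ^ 2 * ψ₀ ^ 3 := sqrt_two_mul_div_rpow_three_halves _ ht
  refine ⟨contDiff_solitonProfile hc, fun x => ?_⟩
  rw [hh]
  exact solitonProfile_ode hc (sinh_sq α) hA hψ x

theorem stmt7 (α : ℝ) (hα : 0 < α) :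
    let ψ₀ : ℝ := 1 / Real.sqrt (2 * (1 + 2 * Real.cosh α ^ 2))
    let A : ℝ := Real.sqrt 2 * Real.sinh α / Real.sqrt (1 + 2 * Real.cosh α ^ 2)
    let h : ℝ := Real.sqrt 2 * Real.cosh α ^ 2 / (1 + 2 * Real.cosh α ^ 2) ^ ((3 : ℝ) / 2)
    let u : ℝ → ℝ := fun x =>
      ψ₀ * (1 + 2 * Real.sinh α ^ 2 / (1 + Real.cosh α * Real.cosh (A * x)))
    ContDiff ℝ 2 u ∧ ∀ x : ℝ, -(deriv (deriv u)) x + u x - 2 * u x ^ 3 = h :=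
  stmt7_general α
end

section
/- For α > 0, the limits of u₊(x) and u₋(x) as x → ±∞ both equal ψ₀, and the terminal value ψ₀ satisfies the cubic equation 2ψ₀³ − ψ₀ + h = 0. -/
/-!
Since `A ≠ 0`, `cosh (A * x) → ∞` as `|x| → ∞`, so both denominators `1 ± cosh α * cosh (A * x)`
are unbounded and the corrections to `ψ₀` vanish. For the cubic, write `s = 1 + 2 cosh² α`: then
`ψ₀ = 1 / (√2 √s)` and `2ψ₀³ - ψ₀ = (1 - s) / (√2 s^{3/2}) = -√2 cosh² α / s^{3/2} = -h`.
-/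

open Filter Topology Bornology Real

theorem Real.tendsto_cosh_cobounded : Tendsto cosh (cobounded ℝ) atTop := by
  refine tendsto_atTop_mono (fun x => ?_)
    ((tendsto_exp_atTop.comp tendsto_norm_cobounded_atTop).atTop_div_const two_pos)
  rw [Function.comp_apply, norm_eq_abs, ← cosh_abs, cosh_eq]
  linarith [exp_pos (-|x|)]

theorem Real.tendsto_cosh_const_mul_cobounded {a : ℝ} (ha : a ≠ 0) :
    Tendsto (fun x => cosh (a * x)) (cobounded ℝ) atTop := by
  refine tendsto_cosh_cobounded.comp (tendsto_norm_atTop_iff_cobounded.mp ?_)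
  simpa only [norm_mul] using tendsto_norm_cobounded_atTop.const_mul_atTop (norm_pos_iff.mpr ha)

theorem tendsto_div_one_add_mul_nhds_zero {ι : Type*} {l : Filter ι} {f : ι → ℝ}
    (hf : Tendsto f l atTop) {c : ℝ} (hc : c ≠ 0) (b : ℝ) :
    Tendsto (fun x => b / (1 + c * f x)) l (𝓝 0) := by
  have hcf : Tendsto (fun x => c * f x) l (cobounded ℝ) := by
    refine tendsto_norm_atTop_iff_cobounded.mp ?_
    simpa only [norm_mul, norm_eq_abs, Function.comp_def] using
      (tendsto_abs_atTop_atTop.comp hf).const_mul_atTop (abs_pos.mpr hc)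
  simpa only [div_eq_mul_inv, mul_zero, Function.comp_def] using
    (tendsto_inv₀_cobounded.comp ((tendsto_const_add_cobounded 1).comp hcf)).const_mul b

theorem tendsto_mul_one_add_div_one_add_mul {ι : Type*} {l : Filter ι} {f : ι → ℝ}
    (hf : Tendsto f l atTop) {c : ℝ} (hc : c ≠ 0) (ψ b : ℝ) :
    Tendsto (fun x => ψ * (1 + b / (1 + c * f x))) l (𝓝 ψ) := by
  simpa using ((tendsto_div_one_add_mul_nhds_zero hf hc b).const_add 1).const_mul ψ

theorem two_mul_pow_three_sub_add_eq_zero (c : ℝ) :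
    2 * (1 / √(2 * (1 + 2 * c ^ 2))) ^ 3 - 1 / √(2 * (1 + 2 * c ^ 2)) +
      √2 * c ^ 2 / (1 + 2 * c ^ 2) ^ ((3 : ℝ) / 2) = 0 := by
  have hs : 0 < 1 + 2 * c ^ 2 := by positivity
  have hq : 0 < √(1 + 2 * c ^ 2) := sqrt_pos.mpr hs
  have hq2 : √(1 + 2 * c ^ 2) ^ 2 = 1 + 2 * c ^ 2 := sq_sqrt hs.le
  have h22 : √2 ^ 2 = 2 := sq_sqrt zero_le_two
  rw [sqrt_mul zero_le_two, rpow_div_two_eq_sqrt _ hs.le, show (3 : ℝ) = (3 : ℕ) by norm_num,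
    rpow_natCast]
  field_simp
  linear_combination (-√(1 + 2 * c ^ 2) ^ 2 + c ^ 2 * (√2 ^ 2 + 2)) * h22 + (-2) * hq2

theorem stmt9 (α : ℝ) (hα : 0 < α) :
    let ψ₀ : ℝ := 1 / Real.sqrt (2 * (1 + 2 * Real.cosh α ^ 2))
    let A : ℝ := Real.sqrt 2 * Real.sinh α / Real.sqrt (1 + 2 * Real.cosh α ^ 2)
    let h : ℝ := Real.sqrt 2 * Real.cosh α ^ 2 / (1 + 2 * Real.cosh α ^ 2) ^ ((3 : ℝ) / 2)
    let uplus : ℝ → ℝ := fun x =>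
      ψ₀ * (1 + 2 * Real.sinh α ^ 2 / (1 + Real.cosh α * Real.cosh (A * x)))
    let uminus : ℝ → ℝ := fun x =>
      ψ₀ * (1 + 2 * Real.sinh α ^ 2 / (1 - Real.cosh α * Real.cosh (A * x)))
    Tendsto uplus atTop (nhds ψ₀) ∧ Tendsto uplus atBot (nhds ψ₀) ∧
    Tendsto uminus atTop (nhds ψ₀) ∧ Tendsto uminus atBot (nhds ψ₀) ∧
    2 * ψ₀ ^ 3 - ψ₀ + h = 0 := by
  intro ψ₀ A h uplus uminus
  have hA : A ≠ 0 := by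
    have := sinh_pos_iff.mpr hα
    positivity
  have hcosh := tendsto_cosh_const_mul_cobounded hA
  have hc : cosh α ≠ 0 := (cosh_pos α).ne'
  have hplus : Tendsto uplus (cobounded ℝ) (𝓝 ψ₀) :=
    tendsto_mul_one_add_div_one_add_mul hcosh hc ψ₀ _
  have hminus : Tendsto uminus (cobounded ℝ) (𝓝 ψ₀) := by
    simpa only [uminus, sub_eq_add_neg, neg_mul] using
      tendsto_mul_one_add_div_one_add_mul hcosh (neg_ne_zero.mpr hc) ψ₀ (2 * sinh α ^ 2)
  exact ⟨hplus.mono_left IsOrderBornology.atTop_le_cobounded,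
    hplus.mono_left IsOrderBornology.atBot_le_cobounded,
    hminus.mono_left IsOrderBornology.atTop_le_cobounded,
    hminus.mono_left IsOrderBornology.atBot_le_cobounded, two_mul_pow_three_sub_add_eq_zero _⟩
end
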